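/- arXiv:1601.03196 — 6 statements merged into one kernel-verified Lean document; each statement's English description precedes it below -/
import Mathlib

section
/- Let Q ∈ ℝ² and let n ∈ ℝ² be a unit vector with ⟨n,Q⟩ > 0. Let u ∈ ℝ² be a unit vector with σ_a := Q₁u₂ − Q₂u₁ > 0, and let u' := u − 2⟨u,n⟩·n be the billiard reflection of u in the line through Q with unit normal n; assume σ_b := Q₁u'₂ − Q₂u'₁ > 0. Define the dual points A := (u₂, −u₁)/σ_a, B := (u'₂, −u'₁)/σ_b, and L := n/⟨n,Q⟩. Then ⟨A,Q⟩ = 1, ⟨B,Q⟩ = 1 and ⟨L,Q⟩ = 1 (so A, B, L all lie on the line {x : ⟨Q,x⟩ = 1}), and ⟨A,L⟩/(‖A‖·‖L‖) = ⟨B,L⟩/(‖B‖·‖L‖) (the angles ∠AOL and ∠BOL at the origin O are equal). -/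
/-!
The dual point of a line through `Q` is its unit normal divided by its distance to the origin, so
it pairs to `1` with `Q`. Since `A`, `B`, `L` are positive multiples of the unit vectors
`(u₂, -u₁)`, `(u₂', -u₁')`, `n`, the cosines of `∠AOL` and `∠BOL` are `u₂ n₁ - u₁ n₂` and
`u₂' n₁ - u₁' n₂`: the tangential components of `u` and `u'`, which the reflection preserves.
-/

lemma div_mul_add_div_mul_eq_one {x₁ x₂ Q₁ Q₂ : ℝ} (h : x₁ * Q₁ + x₂ * Q₂ ≠ 0) :
    x₁ / (x₁ * Q₁ + x₂ * Q₂) * Q₁ + x₂ / (x₁ * Q₁ + x₂ * Q₂) * Q₂ = 1 := by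
  field_simp

lemma sqrt_div_sq_add_div_sq_of_unit {x₁ x₂ s : ℝ} (hx : x₁ ^ 2 + x₂ ^ 2 = 1) (hs : 0 < s) :
    Real.sqrt ((x₁ / s) ^ 2 + (x₂ / s) ^ 2) = 1 / s := by
  rw [div_pow, div_pow, ← add_div, hx, one_div, Real.sqrt_inv, Real.sqrt_sq hs.le, one_div]

lemma cos_angle_div_div_of_unit {x₁ x₂ y₁ y₂ s t : ℝ}
    (hx : x₁ ^ 2 + x₂ ^ 2 = 1) (hy : y₁ ^ 2 + y₂ ^ 2 = 1) (hs : 0 < s) (ht : 0 < t) :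
    (x₁ / s * (y₁ / t) + x₂ / s * (y₂ / t)) /
        (Real.sqrt ((x₁ / s) ^ 2 + (x₂ / s) ^ 2) * Real.sqrt ((y₁ / t) ^ 2 + (y₂ / t) ^ 2)) =
      x₁ * y₁ + x₂ * y₂ := by
  rw [sqrt_div_sq_add_div_sq_of_unit hx hs, sqrt_div_sq_add_div_sq_of_unit hy ht]
  field_simp

section Reflection

variable {u₁ u₂ n₁ n₂ : ℝ}

lemma reflection_sq_add_sq (hn : n₁ ^ 2 + n₂ ^ 2 = 1) (hu : u₁ ^ 2 + u₂ ^ 2 = 1) :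
    (u₁ - 2 * (u₁ * n₁ + u₂ * n₂) * n₁) ^ 2 + (u₂ - 2 * (u₁ * n₁ + u₂ * n₂) * n₂) ^ 2 = 1 := by
  linear_combination hu + 4 * (u₁ * n₁ + u₂ * n₂) ^ 2 * hn

lemma reflection_tangential_component :
    (u₂ - 2 * (u₁ * n₁ + u₂ * n₂) * n₂) * n₁ + -(u₁ - 2 * (u₁ * n₁ + u₂ * n₂) * n₁) * n₂ =
      u₂ * n₁ + -u₁ * n₂ := by
  ring

end Reflection

/-- Under polar duality w.r.t. the unit circle, the Birkhoff billiard
reflection at a boundary point `Q` corresponds to the Angular billiard rule: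
the dual points `A`, `B` of the incoming/outgoing lines and the dual point `L`
of the tangent line all lie on the line `{x : ⟨Q,x⟩ = 1}`, and the angles
`∠AOL` and `∠BOL` at the origin are equal. -/
theorem stmt0 (Q₁ Q₂ n₁ n₂ u₁ u₂ : ℝ)
    (hn : n₁ ^ 2 + n₂ ^ 2 = 1) (hnQ : n₁ * Q₁ + n₂ * Q₂ > 0)
    (hu : u₁ ^ 2 + u₂ ^ 2 = 1)
    (σa : ℝ) (hσa : σa = Q₁ * u₂ - Q₂ * u₁) (hσapos : σa > 0)
    (u₁' u₂' : ℝ)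
    (hu₁' : u₁' = u₁ - 2 * (u₁ * n₁ + u₂ * n₂) * n₁)
    (hu₂' : u₂' = u₂ - 2 * (u₁ * n₁ + u₂ * n₂) * n₂)
    (σb : ℝ) (hσb : σb = Q₁ * u₂' - Q₂ * u₁') (hσbpos : σb > 0)
    (A₁ A₂ B₁ B₂ L₁ L₂ : ℝ)
    (hA₁ : A₁ = u₂ / σa) (hA₂ : A₂ = -u₁ / σa)
    (hB₁ : B₁ = u₂' / σb) (hB₂ : B₂ = -u₁' / σb)
    (hL₁ : L₁ = n₁ / (n₁ * Q₁ + n₂ * Q₂)) (hL₂ : L₂ = n₂ / (n₁ * Q₁ + n₂ * Q₂)) :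
    A₁ * Q₁ + A₂ * Q₂ = 1 ∧ B₁ * Q₁ + B₂ * Q₂ = 1 ∧ L₁ * Q₁ + L₂ * Q₂ = 1 ∧
    (A₁ * L₁ + A₂ * L₂) / (Real.sqrt (A₁ ^ 2 + A₂ ^ 2) * Real.sqrt (L₁ ^ 2 + L₂ ^ 2)) =
      (B₁ * L₁ + B₂ * L₂) / (Real.sqrt (B₁ ^ 2 + B₂ ^ 2) * Real.sqrt (L₁ ^ 2 + L₂ ^ 2)) := by
  have hσa' : σa = u₂ * Q₁ + -u₁ * Q₂ := by rw [hσa]; ring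
  have hσb' : σb = u₂' * Q₁ + -u₁' * Q₂ := by rw [hσb]; ring
  have hJu : u₂ ^ 2 + (-u₁) ^ 2 = 1 := by linear_combination hu
  have hJu' : u₂' ^ 2 + (-u₁') ^ 2 = 1 := by
    rw [hu₁', hu₂']; linear_combination reflection_sq_add_sq hn hu
  subst hA₁ hA₂ hB₁ hB₂ hL₁ hL₂
  refine ⟨?_, ?_, div_mul_add_div_mul_eq_one hnQ.ne', ?_⟩
  · rw [hσa']; exact div_mul_add_div_mul_eq_one (hσa' ▸ hσapos.ne')
  · rw [hσb']; exact div_mul_add_div_mul_eq_one (hσb' ▸ hσbpos.ne')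
  · rw [cos_angle_div_div_of_unit hJu hn hσapos hnQ, cos_angle_div_div_of_unit hJu' hn hσbpos hnQ,
      hu₁', hu₂']
    exact reflection_tangential_component.symm
end

section
/- Let δ, r, ρ, r₁, r₂, a, b be real numbers with r ≠ 0, and suppose that in ℂ one has r₁·e^{−iδ} = r + a·(ρ + i·r) and r₂·e^{iδ} = r + b·(ρ + i·r). Then r·cos δ + ρ·sin δ ≠ 0 and r·cos δ − ρ·sin δ ≠ 0, and: a = −r·sin δ/(r·cos δ + ρ·sin δ), r₁ = r²/(r·cos δ + ρ·sin δ), b = r·sin δ/(r·cos δ − ρ·sin δ), r₂ = r²/(r·cos δ − ρ·sin δ). -/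
open Complex

section TangentLine

variable {δ r ρ s c : ℝ}

theorem re_im_of_mul_exp_neg_eq (h : (s : ℂ) * exp (-(δ : ℂ) * I) = r + c * (ρ + I * r)) :
    s * Real.cos δ = r + c * ρ ∧ -(s * Real.sin δ) = c * r := by
  rw [← ofReal_neg] at h
  have hre := congrArg re h
  have him := congrArg im h
  simp only [exp_ofReal_mul_I_re, exp_ofReal_mul_I_im, add_re, add_im, mul_re, mul_im, ofReal_re, ofReal_im, I_re, I_im, Real.cos_neg, Real.sin_neg] at hre him
  constructor <;> linarith

theorem mul_add_eq_sq_of_mul_exp_neg_eq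
    (h : (s : ℂ) * exp (-(δ : ℂ) * I) = r + c * (ρ + I * r)) :
    s * (r * Real.cos δ + ρ * Real.sin δ) = r ^ 2 := by
  obtain ⟨hre, him⟩ := re_im_of_mul_exp_neg_eq h
  linear_combination r * hre - ρ * him

theorem solve_mul_exp_neg_eq (hr : r ≠ 0)
    (h : (s : ℂ) * exp (-(δ : ℂ) * I) = r + c * (ρ + I * r)) :
    r * Real.cos δ + ρ * Real.sin δ ≠ 0 ∧
    c = -(r * Real.sin δ) / (r * Real.cos δ + ρ * Real.sin δ) ∧
    s = r ^ 2 / (r * Real.cos δ + ρ * Real.sin δ) := by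
  have hs := mul_add_eq_sq_of_mul_exp_neg_eq h
  have hD : r * Real.cos δ + ρ * Real.sin δ ≠ 0 := by
    rintro hD
    rw [hD, mul_zero] at hs
    exact hr (pow_eq_zero_iff two_ne_zero |>.mp hs.symm)
  have him := (re_im_of_mul_exp_neg_eq h).2
  refine ⟨hD, ?_, eq_div_of_mul_eq hD hs⟩
  rw [eq_div_iff hD]
  apply mul_right_cancel₀ hr
  linear_combination -((r * Real.cos δ + ρ * Real.sin δ) * him) - Real.sin δ * hs

end TangentLine

open Complex in
/-- equations (3) of the paper: solving the complex tangency
equations `r₁e^{−iδ} = r + a(ρ + ir)` and `r₂e^{iδ} = r + b(ρ + ir)` for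
`a, b, r₁, r₂`. -/
theorem stmt5 (δ r ρ r₁ r₂ a b : ℝ) (hr : r ≠ 0)
    (h1 : (r₁ : ℂ) * Complex.exp (-(δ : ℂ) * Complex.I) =
      (r : ℂ) + (a : ℂ) * ((ρ : ℂ) + Complex.I * (r : ℂ)))
    (h2 : (r₂ : ℂ) * Complex.exp ((δ : ℂ) * Complex.I) =
      (r : ℂ) + (b : ℂ) * ((ρ : ℂ) + Complex.I * (r : ℂ))) :
    r * Real.cos δ + ρ * Real.sin δ ≠ 0 ∧
    r * Real.cos δ - ρ * Real.sin δ ≠ 0 ∧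
    a = -(r * Real.sin δ) / (r * Real.cos δ + ρ * Real.sin δ) ∧
    r₁ = r ^ 2 / (r * Real.cos δ + ρ * Real.sin δ) ∧
    b = r * Real.sin δ / (r * Real.cos δ - ρ * Real.sin δ) ∧
    r₂ = r ^ 2 / (r * Real.cos δ - ρ * Real.sin δ) := by
  obtain ⟨hD₁, ha, hr₁⟩ := solve_mul_exp_neg_eq hr h1
  -- the second equation is the first one at the angle `-δ`
  rw [← neg_neg (δ : ℂ), ← ofReal_neg] at h2
  obtain ⟨hD₂, hb, hr₂⟩ := solve_mul_exp_neg_eq hr h2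
  simp only [Real.cos_neg, Real.sin_neg, mul_neg, ← sub_eq_add_neg, neg_neg] at hD₂ hb hr₂
  exact ⟨hD₁, hD₂, ha, hr₁, hb, hr₂⟩
end

section
/- Let p : ℝ → ℝ be twice continuously differentiable and define S(φ₁, φ₂) := 2·p((φ₁+φ₂)/2)·sin((φ₂−φ₁)/2). Then the mixed partial derivative satisfies ∂²S/∂φ₁∂φ₂(φ₁,φ₂) = ½·(p''(φ̄) + p(φ̄))·sin δ, where φ̄ = (φ₁+φ₂)/2 and δ = (φ₂−φ₁)/2. In particular, if p(φ) + p''(φ) > 0 for all φ and 0 < φ₂ − φ₁ < 2π, then ∂²S/∂φ₁∂φ₂(φ₁,φ₂) > 0. -/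
/-!
In the coordinates `u = (φ₁ + φ₂) / 2`, `v = (φ₂ - φ₁) / 2` the generating function is
`2 p(u) sin v`. Differentiating in `φ₁` gives `p'(u) sin v - p(u) cos v`; differentiating this
in `φ₂`, the two `p'(u) cos v` terms cancel and `½ (p''(u) + p(u)) sin v` remains. For
`0 < φ₂ - φ₁ < 2π` we have `v ∈ (0, π)`, so `sin v > 0`.
-/

open Real

theorem hasDerivAt_generatingFunction_fst {p : ℝ → ℝ} {s t : ℝ}
    (hp : DifferentiableAt ℝ p ((s + t) / 2)) :
    HasDerivAt (fun s => 2 * p ((s + t) / 2) * sin ((t - s) / 2))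
      (deriv p ((s + t) / 2) * sin ((t - s) / 2) - p ((s + t) / 2) * cos ((t - s) / 2)) s := by
  have hu : HasDerivAt (fun s : ℝ => (s + t) / 2) (1 / 2) s := by
    simpa using ((hasDerivAt_id s).add_const t).div_const 2
  have hv : HasDerivAt (fun s : ℝ => (t - s) / 2) (-1 / 2) s := by
    simpa using ((hasDerivAt_id s).const_sub t).div_const 2
  have hpu := hp.hasDerivAt.comp s hu
  exact ((hpu.const_mul 2).mul hv.sin).congr_deriv (by simp only [Function.comp_apply]; ring)

theorem hasDerivAt_deriv_fst_generatingFunction {p : ℝ → ℝ} {s t : ℝ}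
    (hp : DifferentiableAt ℝ p ((s + t) / 2))
    (hp' : DifferentiableAt ℝ (deriv p) ((s + t) / 2)) :
    HasDerivAt
      (fun t => deriv p ((s + t) / 2) * sin ((t - s) / 2) - p ((s + t) / 2) * cos ((t - s) / 2))
      (1 / 2 * (deriv (deriv p) ((s + t) / 2) + p ((s + t) / 2)) * sin ((t - s) / 2)) t := by
  have hu : HasDerivAt (fun t : ℝ => (s + t) / 2) (1 / 2) t := by
    simpa using ((hasDerivAt_id t).const_add s).div_const 2
  have hv : HasDerivAt (fun t : ℝ => (t - s) / 2) (1 / 2) t := by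
    simpa using ((hasDerivAt_id t).sub_const s).div_const 2
  have hpu := hp.hasDerivAt.comp t hu
  have hp'u := hp'.hasDerivAt.comp t hu
  exact ((hp'u.mul hv.sin).sub (hpu.mul hv.cos)).congr_deriv
    (by simp only [Function.comp_apply]; ring)

theorem deriv_deriv_generatingFunction {p : ℝ → ℝ} (hp : Differentiable ℝ p) (φ₁ φ₂ : ℝ)
    (hp' : DifferentiableAt ℝ (deriv p) ((φ₁ + φ₂) / 2)) :
    deriv (fun t => deriv (fun s => 2 * p ((s + t) / 2) * sin ((t - s) / 2)) φ₁) φ₂ =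
      1 / 2 * (deriv (deriv p) ((φ₁ + φ₂) / 2) + p ((φ₁ + φ₂) / 2)) *
        sin ((φ₂ - φ₁) / 2) := by
  have hfst : (fun t => deriv (fun s => 2 * p ((s + t) / 2) * sin ((t - s) / 2)) φ₁) =
      fun t => deriv p ((φ₁ + t) / 2) * sin ((t - φ₁) / 2) -
        p ((φ₁ + t) / 2) * cos ((t - φ₁) / 2) :=
    funext fun t => (hasDerivAt_generatingFunction_fst (hp _)).deriv
  rw [hfst]
  exact (hasDerivAt_deriv_fst_generatingFunction (hp _) hp').deriv

/-- twist condition, Theorem 5 of the paper: for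
`S(φ₁,φ₂) = 2p((φ₁+φ₂)/2)·sin((φ₂−φ₁)/2)` the mixed partial derivative equals
`½(p''(φ̄) + p(φ̄))·sin δ`; if `p + p'' > 0` everywhere and `0 < φ₂ − φ₁ < 2π`,
it is positive. -/
theorem stmt7 (p : ℝ → ℝ) (hp : ContDiff ℝ 2 p)
    (S : ℝ → ℝ → ℝ)
    (hS : ∀ φ₁ φ₂ : ℝ, S φ₁ φ₂ = 2 * p ((φ₁ + φ₂) / 2) * Real.sin ((φ₂ - φ₁) / 2))
    (φ₁ φ₂ : ℝ) :
    deriv (fun t => deriv (fun s => S s t) φ₁) φ₂ =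
      (1 / 2) * (deriv (deriv p) ((φ₁ + φ₂) / 2) + p ((φ₁ + φ₂) / 2)) *
        Real.sin ((φ₂ - φ₁) / 2) ∧
    ((∀ φ : ℝ, 0 < p φ + deriv (deriv p) φ) → 0 < φ₂ - φ₁ → φ₂ - φ₁ < 2 * Real.pi →
      0 < deriv (fun t => deriv (fun s => S s t) φ₁) φ₂) := by
  obtain rfl : S = fun φ₁ φ₂ => 2 * p ((φ₁ + φ₂) / 2) * sin ((φ₂ - φ₁) / 2) := funext₂ hS
  have hmixed := deriv_deriv_generatingFunction (hp.differentiable two_ne_zero) φ₁ φ₂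
    (hp.differentiable_deriv_two _)
  refine ⟨hmixed, fun hpos hδ hδ' => ?_⟩
  have hsin : 0 < sin ((φ₂ - φ₁) / 2) := sin_pos_of_pos_of_lt_pi (by linarith) (by linarith)
  have hradius := hpos ((φ₁ + φ₂) / 2)
  rw [hmixed]
  exact mul_pos (mul_pos one_half_pos (by linarith)) hsin
end

section
/- Let F : ℝ² → ℝ, let (x,y) ∈ ℝ², and let P := F_x(x,y), Q := F_y(x,y) be real numbers (values of the partial derivatives of F at (x,y)). Let m ∈ ℝ and ε ≠ 0. Set R := x² + y², σ := x·Q − y·P, and assume R > 0 and R + 2εσ > 0; set μ := −R·ε/(R + 2εσ), A := (x + εQ, y − εP), B := (x + μQ, y − μP). If F(A)/(‖A‖²)^m = F(B)/(‖B‖²)^m (real powers; note ‖A‖² > 0 and ‖B‖² > 0), then F(A)·(−μ/ε)^{2m} = F(B), where (−μ/ε)^{2m} is the real power of the positive number −μ/ε = R/(R + 2εσ). -/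
/-!
Both `A` and `B` lie on the line through `(x, y)` in the direction `(Q, -P)`, and the Angular
billiard parameter `μ = -Rε/(R + 2εσ)` is exactly the one for which `‖B‖ = (-μ/ε) ‖A‖`.
Hence `(‖B‖²)^m = (-μ/ε)^{2m} (‖A‖²)^m`, and clearing denominators in `G(A) = G(B)` gives
the identity.
-/

theorem sq_add_sq_add_smul_perp (x y P Q t : ℝ) :
    (x + t * Q) ^ 2 + (y - t * P) ^ 2
      = (x ^ 2 + y ^ 2) + 2 * t * (x * Q - y * P) + t ^ 2 * (P ^ 2 + Q ^ 2) := by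
  ring

theorem angular_normSq_scaling (R σ N ε : ℝ) (hD : R + 2 * ε * σ ≠ 0) :
    R + 2 * (-R * ε / (R + 2 * ε * σ)) * σ + (-R * ε / (R + 2 * ε * σ)) ^ 2 * N
      = (R / (R + 2 * ε * σ)) ^ 2 * (R + 2 * ε * σ + ε ^ 2 * N) := by
  field_simp
  ring

theorem mul_rpow_two_mul_eq_of_div_rpow_eq {u v a t m : ℝ} (ha : 0 < a) (ht : 0 < t)
    (h : u / a ^ m = v / (t ^ 2 * a) ^ m) : u * t ^ (2 * m) = v := by
  have hsplit : (t ^ 2 * a) ^ m = t ^ (2 * m) * a ^ m := by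
    rw [Real.mul_rpow (by positivity) ha.le, Real.rpow_mul ht.le, Real.rpow_two]
  have ham : a ^ m ≠ 0 := (Real.rpow_pos_of_pos ha m).ne'
  have htm : t ^ (2 * m) ≠ 0 := (Real.rpow_pos_of_pos ht _).ne'
  rw [hsplit] at h
  field_simp at h
  linarith

theorem stmt11_general (F : ℝ × ℝ → ℝ) (x y P Q : ℝ)
    (m ε : ℝ) (hε : ε ≠ 0)
    (R σ μ : ℝ) (hR : R = x ^ 2 + y ^ 2) (hσ : σ = x * Q - y * P)
    (hR0 : 0 < R) (hden : 0 < R + 2 * ε * σ)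
    (hμ : μ = -R * ε / (R + 2 * ε * σ))
    (A B : ℝ × ℝ) (hA : A = (x + ε * Q, y - ε * P)) (hB : B = (x + μ * Q, y - μ * P))
    (hinv : F A / (A.1 ^ 2 + A.2 ^ 2) ^ m = F B / (B.1 ^ 2 + B.2 ^ 2) ^ m) :
    F A * (-μ / ε) ^ (2 * m) = F B := by
  have hratio : -μ / ε = R / (R + 2 * ε * σ) := by
    rw [hμ]
    field_simp
  have hnormA : A.1 ^ 2 + A.2 ^ 2 = R + 2 * ε * σ + ε ^ 2 * (P ^ 2 + Q ^ 2) := by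
    rw [hA, sq_add_sq_add_smul_perp, hR, hσ]
  have hnormB : B.1 ^ 2 + B.2 ^ 2 = (-μ / ε) ^ 2 * (A.1 ^ 2 + A.2 ^ 2) := by
    rw [hB, sq_add_sq_add_smul_perp, ← hR, ← hσ, hratio, hnormA, hμ]
    exact angular_normSq_scaling R σ _ ε hden.ne'
  rw [hnormB] at hinv
  refine mul_rpow_two_mul_eq_of_div_rpow_eq ?_ ?_ hinv
  · rw [hnormA]
    positivity
  · rw [hratio]
    positivity

/-- Lemma 1 of the paper: if `G = F/(x²+y²)^m` takes equal values
at the Angular-billiard-related points `A = (x+εF_y, y−εF_x)` and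
`B = (x+μF_y, y−μF_x)` with `μ = −Rε/(R+2εσ)`, then
`F(A)·(−μ/ε)^{2m} = F(B)` (real powers). -/
theorem stmt11 (F : ℝ × ℝ → ℝ) (x y P Q : ℝ)
    (hP : P = deriv (fun s => F (s, y)) x) (hQ : Q = deriv (fun s => F (x, s)) y)
    (m ε : ℝ) (hε : ε ≠ 0)
    (R σ μ : ℝ) (hR : R = x ^ 2 + y ^ 2) (hσ : σ = x * Q - y * P)
    (hR0 : 0 < R) (hden : 0 < R + 2 * ε * σ)
    (hμ : μ = -R * ε / (R + 2 * ε * σ))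
    (A B : ℝ × ℝ) (hA : A = (x + ε * Q, y - ε * P)) (hB : B = (x + μ * Q, y - μ * P))
    (hinv : F A / (A.1 ^ 2 + A.2 ^ 2) ^ m = F B / (B.1 ^ 2 + B.2 ^ 2) ^ m) :
    F A * (-μ / ε) ^ (2 * m) = F B :=
  stmt11_general F x y P Q m ε hε R σ μ hR hσ hR0 hden hμ A B hA hB hinv
end

section
/- Let F be a polynomial in two variables x, y over a commutative ring (e.g. over ℝ). Define H(F) := F_xx·F_y² − 2·F_xy·F_x·F_y + F_yy·F_x², where subscripts denote partial derivatives. Then the following polynomial identity holds: F_y·∂_x(H(F)) − F_x·∂_y(H(F)) = F_xxx·F_y³ − 3·F_xxy·F_x·F_y² + 3·F_xyy·F_x²·F_y − F_yyy·F_x³. -/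
/-!
Write `a = F_x`, `b = F_y`, `(p, q, r) = (F_xx, F_xy, F_yy)` and `v = b ∂_x - a ∂_y`.
Then `H(F) = p b² - 2 q a b + r a²`, while `v a = b p - a q` and, by symmetry of mixed
partials, `v b = b q - a r`. Applying the Leibniz rule to the form, the terms containing `v a`
and `v b` add up to `2 (v b · v a - v a · v b) = 0`, so
`v H(F) = (v p) b² - 2 (v q) a b + (v r) a²`; substituting `v p = b F_xxx - a F_xxy` and its
analogues for `q`, `r` gives the cubic.
-/

open MvPolynomial

noncomputable def Hpoly {R : Type*} [CommRing R] (u : MvPolynomial (Fin 2) R) :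
    MvPolynomial (Fin 2) R :=
  pderiv 0 (pderiv 0 u) * (pderiv 1 u) ^ 2 -
    2 * pderiv 1 (pderiv 0 u) * pderiv 0 u * pderiv 1 u +
    pderiv 1 (pderiv 1 u) * (pderiv 0 u) ^ 2

theorem MvPolynomial.pderiv_pderiv_comm {R σ : Type*} [CommSemiring R] (i j : σ)
    (p : MvPolynomial σ R) : pderiv i (pderiv j p) = pderiv j (pderiv i p) := by
  classical
  induction p using MvPolynomial.induction_on with
  | C a => simp only [pderiv_C, map_zero]
  | add p q hp hq => simp only [map_add, hp, hq]
  | mul_X p k hp =>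
    simp only [pderiv_mul, map_add, pderiv_X, hp, Pi.single_apply]
    split_ifs <;> simp only [pderiv_one, mul_zero, mul_one, add_zero, map_zero]
    ring

/-- The quadratic form of the symmetric matrix `[[p, q], [q, r]]` at the vector `(b, -a)`. -/
def hessianForm {A : Type*} [CommRing A] (a b p q r : A) : A :=
  p * b ^ 2 - 2 * q * a * b + r * a ^ 2

theorem Derivation.map_hessianForm {R A : Type*} [CommSemiring R] [CommRing A] [Algebra R A]
    (D : Derivation R A A) {a b p q r : A} (ha : D a = b * p - a * q)
    (hb : D b = b * q - a * r) :
    D (hessianForm a b p q r) = hessianForm a b (D p) (D q) (D r) := by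
  have h2 : D 2 = 0 := by simpa using D.map_natCast 2
  simp only [hessianForm, map_add, map_sub, leibniz, leibniz_pow, h2, smul_eq_mul]
  rw [ha, hb]
  ring

section

variable {R : Type*} [CommRing R]

noncomputable def hamiltonianDerivation (F : MvPolynomial (Fin 2) R) :
    Derivation R (MvPolynomial (Fin 2) R) (MvPolynomial (Fin 2) R) :=
  pderiv 1 F • pderiv 0 - pderiv 0 F • pderiv 1

theorem hamiltonianDerivation_apply (F u : MvPolynomial (Fin 2) R) :
    hamiltonianDerivation F u = pderiv 1 F * pderiv 0 u - pderiv 0 F * pderiv 1 u := rfl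

theorem Hpoly_eq_hessianForm (u : MvPolynomial (Fin 2) R) :
    Hpoly u = hessianForm (pderiv 0 u) (pderiv 1 u) (pderiv 0 (pderiv 0 u))
      (pderiv 1 (pderiv 0 u)) (pderiv 1 (pderiv 1 u)) := rfl

end

/-- the Lie derivative of `H(F)` along `v = F_y∂_x − F_x∂_y` equals
`F_xxx F_y³ − 3F_xxy F_x F_y² + 3F_xyy F_x² F_y − F_yyy F_x³` (identity used in the
proof of Theorem 6 of the paper). -/
theorem stmt13 {R : Type*} [CommRing R] (F : MvPolynomial (Fin 2) R) :
    pderiv 1 F * pderiv 0 (Hpoly F) - pderiv 0 F * pderiv 1 (Hpoly F) =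
      pderiv 0 (pderiv 0 (pderiv 0 F)) * (pderiv 1 F) ^ 3 -
        3 * pderiv 1 (pderiv 0 (pderiv 0 F)) * pderiv 0 F * (pderiv 1 F) ^ 2 +
        3 * pderiv 1 (pderiv 1 (pderiv 0 F)) * (pderiv 0 F) ^ 2 * pderiv 1 F -
        pderiv 1 (pderiv 1 (pderiv 1 F)) * (pderiv 0 F) ^ 3 := by
  have hcomm := pderiv_pderiv_comm (R := R) (0 : Fin 2) 1
  have hH := (hamiltonianDerivation F).map_hessianForm
    (a := pderiv 0 F) (b := pderiv 1 F) (p := pderiv 0 (pderiv 0 F))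
    (q := pderiv 1 (pderiv 0 F)) (r := pderiv 1 (pderiv 1 F)) rfl
    (by rw [hamiltonianDerivation_apply, hcomm])
  rw [← Hpoly_eq_hessianForm] at hH
  simp only [hessianForm, hamiltonianDerivation_apply, hcomm] at hH
  linear_combination hH
end

section
/- Let F : ℝ² → ℝ be three times continuously differentiable on a neighborhood of a point (x,y) ∈ ℝ² with F(x,y) = 0 and R := x² + y² > 0, and let m ∈ ℝ. Write Fx := F_x(x,y), Fy := F_y(x,y), σ := x·Fy − y·Fx, and for small ε set μ(ε) := −R·ε/(R + 2εσ). Suppose there exists δ₀ > 0 such that for all ε with 0 < |ε| < δ₀ one has F(x + ε·Fy, y − ε·Fx)·(R/(R + 2εσ))^{2m} = F(x + μ(ε)·Fy, y − μ(ε)·Fx) (real powers of the positive base R/(R+2εσ)). Then, evaluating all derivatives at (x,y): R·(F_xxx·Fy³ − 3·F_xxy·Fy²·Fx + 3·F_xyy·Fy·Fx² − F_yyy·Fx³) + 6·(1−m)·(F_xx·Fy² − 2·F_xy·Fx·Fy + F_yy·Fx²)·σ = 0. -/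
/-- Partial derivative of `F : ℝ × ℝ → ℝ` in the first variable. -/
noncomputable def pdx (F : ℝ × ℝ → ℝ) : ℝ × ℝ → ℝ :=
  fun p => deriv (fun s => F (s, p.2)) p.1

/-- Partial derivative of `F : ℝ × ℝ → ℝ` in the second variable. -/
noncomputable def pdy (F : ℝ × ℝ → ℝ) : ℝ × ℝ → ℝ :=
  fun p => deriv (fun s => F (p.1, s)) p.2

/-!
Restrict `F` to the line `g t = F ((x, y) + t • v)` with `v = (F_y, -F_x)`, tangent to `{F = 0}`.
Then `g 0 = g' 0 = 0`, `g'' 0 = H(F)`, and `g''' 0` is the cubic form of the statement: the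
iterated derivative along the constant field `v`, expanded with Schwarz's theorem. With
`b t = R / (R + 2tσ)` the hypothesis reads `g t * b t ^ (2m) = g (-t * b t)` near `0`.
Differentiating three times at `0` (Leibniz on the left, Faà di Bruno on the right) gives
`2 g''' 0 + 3 (2m - 2) b' 0 g'' 0 = 0`, and `b' 0 = -2σ/R`.
-/

open Filter Topology Set

section DirDeriv

variable {E G : Type*} [NormedAddCommGroup E] [NormedSpace ℝ E]
  [NormedAddCommGroup G] [NormedSpace ℝ G] {f : E → G} {U : Set E} {a v : E}

noncomputable def dirDeriv (v : E) (f : E → G) : E → G := fun q => fderiv ℝ f q v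

theorem ContDiffOn.dirDeriv {n : ℕ} (hU : IsOpen U) (hf : ContDiffOn ℝ (n + 1) f U) (v : E) :
    ContDiffOn ℝ n (dirDeriv v f) U :=
  (hf.fderiv_of_isOpen hU le_rfl).clm_apply contDiffOn_const

theorem DifferentiableAt.hasDerivAt_comp_add_smul {t : ℝ}
    (hf : DifferentiableAt ℝ f (a + t • v)) :
    HasDerivAt (fun s : ℝ => f (a + s • v)) (dirDeriv v f (a + t • v)) t := by
  have hline : HasDerivAt (fun s : ℝ => a + s • v) v t := by
    simpa using ((hasDerivAt_id t).smul_const v).const_add a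
  exact hf.hasFDerivAt.comp_hasDerivAt t hline

theorem iteratedDeriv_comp_add_smul {n : ℕ} (hU : IsOpen U) (hf : ContDiffOn ℝ n f U) {t : ℝ}
    (ht : a + t • v ∈ U) :
    iteratedDeriv n (fun s : ℝ => f (a + s • v)) t = (dirDeriv v)^[n] f (a + t • v) := by
  induction n generalizing f with
  | zero => simp
  | succ n ih =>
    have hnear : ∀ᶠ s in 𝓝 t, a + s • v ∈ U :=
      (Continuous.continuousAt (by fun_prop)).preimage_mem_nhds (hU.mem_nhds ht)
    have hderiv : deriv (fun s : ℝ => f (a + s • v)) =ᶠ[𝓝 t]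
        fun s => dirDeriv v f (a + s • v) := by
      filter_upwards [hnear] with s hs
      exact ((hf.differentiableOn (by simp)).differentiableAt
        (hU.mem_nhds hs)).hasDerivAt_comp_add_smul.deriv
    rw [iteratedDeriv_succ', hderiv.iteratedDeriv_eq, ih (hf.dirDeriv hU v)]
    rfl

theorem dirDeriv_congr {g : E → G} {q : E} (h : f =ᶠ[𝓝 q] g) :
    dirDeriv v f q = dirDeriv v g q := by
  simp only [dirDeriv, h.fderiv_eq]

theorem dirDeriv_fun_add {g : E → G} {q : E} (hf : DifferentiableAt ℝ f q)
    (hg : DifferentiableAt ℝ g q) :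
    dirDeriv v (fun r => f r + g r) q = dirDeriv v f q + dirDeriv v g q := by
  simp [dirDeriv, fderiv_fun_add hf hg]

theorem dirDeriv_const_mul {f : E → ℝ} {q : E} (hf : DifferentiableAt ℝ f q) (c : ℝ) :
    dirDeriv v (fun r => c * f r) q = c * dirDeriv v f q := by
  simp [dirDeriv, fderiv_const_mul hf c]

theorem dirDeriv_comm {q : E} (hf : ContDiffAt ℝ 2 f q) (u w : E) :
    dirDeriv u (dirDeriv w f) q = dirDeriv w (dirDeriv u f) q := by
  have hd : DifferentiableAt ℝ (fderiv ℝ f) q :=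
    (hf.fderiv_right (m := 1) (by norm_num)).differentiableAt one_ne_zero
  have key (u w : E) : dirDeriv u (dirDeriv w f) q = fderiv ℝ (fderiv ℝ f) q u w := by
    change fderiv ℝ (fun r => fderiv ℝ f r w) q u = _
    simp [fderiv_clm_apply hd (differentiableAt_const w)]
  rw [key, key, (hf.isSymmSndFDerivAt (by simp)) u w]

end DirDeriv

section Plane

variable {f : ℝ × ℝ → ℝ} {U : Set (ℝ × ℝ)} {q : ℝ × ℝ}

theorem pdx_eq_dirDeriv (hf : DifferentiableAt ℝ f q) : pdx f q = dirDeriv (1, 0) f q := by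
  have hf' : HasFDerivAt f (fderiv ℝ f q) (q.1, q.2) := hf.hasFDerivAt
  exact (hf'.comp_hasDerivAt q.1 ((hasDerivAt_id q.1).prodMk (hasDerivAt_const q.1 q.2))).deriv

theorem pdy_eq_dirDeriv (hf : DifferentiableAt ℝ f q) : pdy f q = dirDeriv (0, 1) f q := by
  have hf' : HasFDerivAt f (fderiv ℝ f q) (q.1, q.2) := hf.hasFDerivAt
  exact (hf'.comp_hasDerivAt q.2 ((hasDerivAt_const q.2 q.1).prodMk (hasDerivAt_id q.2))).deriv

theorem dirDeriv_eq_pdx_pdy (hf : DifferentiableAt ℝ f q) (v : ℝ × ℝ) :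
    dirDeriv v f q = v.1 * pdx f q + v.2 * pdy f q := by
  have hv : v = v.1 • ((1 : ℝ), (0 : ℝ)) + v.2 • ((0 : ℝ), (1 : ℝ)) := by ext <;> simp
  rw [pdx_eq_dirDeriv hf, pdy_eq_dirDeriv hf]
  calc fderiv ℝ f q v = fderiv ℝ f q (v.1 • (1, 0) + v.2 • (0, 1)) := by rw [← hv]
    _ = _ := by simp only [map_add, map_smul, smul_eq_mul, dirDeriv]

theorem pdx_congr {g : ℝ × ℝ → ℝ} (h : f =ᶠ[𝓝 q] g) : pdx f q = pdx g q :=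
  Filter.EventuallyEq.deriv_eq <|
    (Continuous.tendsto (f := fun s : ℝ => (s, q.2)) (by fun_prop) q.1).eventually h

theorem pdy_congr {g : ℝ × ℝ → ℝ} (h : f =ᶠ[𝓝 q] g) : pdy f q = pdy g q :=
  Filter.EventuallyEq.deriv_eq <|
    (Continuous.tendsto (f := fun s : ℝ => (q.1, s)) (by fun_prop) q.2).eventually h

theorem ContDiffOn.pdx {n : ℕ} (hU : IsOpen U) (hf : ContDiffOn ℝ (n + 1) f U) :
    ContDiffOn ℝ n (pdx f) U :=
  (hf.dirDeriv hU _).congr fun _ hq =>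
    pdx_eq_dirDeriv ((hf.contDiffAt (hU.mem_nhds hq)).differentiableAt (by simp))

theorem ContDiffOn.pdy {n : ℕ} (hU : IsOpen U) (hf : ContDiffOn ℝ (n + 1) f U) :
    ContDiffOn ℝ n (pdy f) U :=
  (hf.dirDeriv hU _).congr fun _ hq =>
    pdy_eq_dirDeriv ((hf.contDiffAt (hU.mem_nhds hq)).differentiableAt (by simp))

theorem pdx_pdy_eqOn (hU : IsOpen U) (hf : ContDiffOn ℝ 2 f U) :
    EqOn (pdx (pdy f)) (pdy (pdx f)) U := by
  intro q hq
  have hd : ∀ r ∈ U, DifferentiableAt ℝ f r := fun r hr =>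
    (hf.contDiffAt (hU.mem_nhds hr)).differentiableAt (by simp)
  have hx : pdx f =ᶠ[𝓝 q] dirDeriv (1, 0) f :=
    Filter.eventually_of_mem (hU.mem_nhds hq) fun r hr => pdx_eq_dirDeriv (hd r hr)
  have hy : pdy f =ᶠ[𝓝 q] dirDeriv (0, 1) f :=
    Filter.eventually_of_mem (hU.mem_nhds hq) fun r hr => pdy_eq_dirDeriv (hd r hr)
  have hd' : ∀ w, DifferentiableAt ℝ (dirDeriv w f) q := fun w =>
    ((hf.dirDeriv (n := 1) hU w).contDiffAt (hU.mem_nhds hq)).differentiableAt (by simp)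
  rw [pdx_congr hy, pdy_congr hx, pdx_eq_dirDeriv (hd' _), pdy_eq_dirDeriv (hd' _)]
  exact dirDeriv_comm (hf.contDiffAt (hU.mem_nhds hq)) _ _

theorem iterate_dirDeriv_two_eqOn (hU : IsOpen U) (hf : ContDiffOn ℝ 2 f U) (v : ℝ × ℝ) :
    EqOn ((dirDeriv v)^[2] f) (fun q => v.1 ^ 2 * pdx (pdx f) q +
      2 * v.1 * v.2 * pdy (pdx f) q + v.2 ^ 2 * pdy (pdy f) q) U := by
  intro q hq
  have hfirst : dirDeriv v f =ᶠ[𝓝 q] fun r => v.1 * pdx f r + v.2 * pdy f r :=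
    Filter.eventually_of_mem (hU.mem_nhds hq) fun r hr =>
      dirDeriv_eq_pdx_pdy ((hf.contDiffAt (hU.mem_nhds hr)).differentiableAt (by simp)) v
  have hx : DifferentiableAt ℝ (pdx f) q :=
    ((hf.pdx (n := 1) hU).contDiffAt (hU.mem_nhds hq)).differentiableAt (by simp)
  have hy : DifferentiableAt ℝ (pdy f) q :=
    ((hf.pdy (n := 1) hU).contDiffAt (hU.mem_nhds hq)).differentiableAt (by simp)
  change dirDeriv v (dirDeriv v f) q = _
  rw [dirDeriv_congr hfirst]
  simp (disch := fun_prop) only [dirDeriv_fun_add, dirDeriv_const_mul]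
  rw [dirDeriv_eq_pdx_pdy hx, dirDeriv_eq_pdx_pdy hy, pdx_pdy_eqOn hU hf hq]
  ring

theorem iterate_dirDeriv_three_apply (hU : IsOpen U) (hf : ContDiffOn ℝ 3 f U) (v : ℝ × ℝ)
    (hq : q ∈ U) :
    (dirDeriv v)^[3] f q = v.1 ^ 3 * pdx (pdx (pdx f)) q +
      3 * v.1 ^ 2 * v.2 * pdy (pdx (pdx f)) q + 3 * v.1 * v.2 ^ 2 * pdy (pdy (pdx f)) q +
      v.2 ^ 3 * pdy (pdy (pdy f)) q := by
  have hU' : U ∈ 𝓝 q := hU.mem_nhds hq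
  have hf₂ : ContDiffOn ℝ 2 f U := hf.of_le (by norm_num)
  have hxx : DifferentiableAt ℝ (pdx (pdx f)) q :=
    (((hf.pdx (n := 2) hU).pdx (n := 1) hU).contDiffAt hU').differentiableAt (by simp)
  have hyx : DifferentiableAt ℝ (pdy (pdx f)) q :=
    (((hf.pdx (n := 2) hU).pdy (n := 1) hU).contDiffAt hU').differentiableAt (by simp)
  have hyy : DifferentiableAt ℝ (pdy (pdy f)) q :=
    (((hf.pdy (n := 2) hU).pdy (n := 1) hU).contDiffAt hU').differentiableAt (by simp)
  have hxyy : pdx (pdy (pdy f)) q = pdy (pdy (pdx f)) q := by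
    rw [pdx_pdy_eqOn hU (hf.pdy (n := 2) hU) hq]
    exact pdy_congr (Filter.eventually_of_mem hU' (pdx_pdy_eqOn hU hf₂))
  rw [Function.iterate_succ_apply',
    dirDeriv_congr (Filter.eventually_of_mem hU' (iterate_dirDeriv_two_eqOn hU hf₂ v))]
  simp (disch := fun_prop) only [dirDeriv_fun_add, dirDeriv_const_mul]
  rw [dirDeriv_eq_pdx_pdy hxx, dirDeriv_eq_pdx_pdy hyx, dirDeriv_eq_pdx_pdy hyy,
    pdx_pdy_eqOn hU (hf.pdx (n := 2) hU) hq, hxyy]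
  ring

end Plane

theorem two_mul_iteratedDeriv_three_add_eq_zero {g b : ℝ → ℝ} {p : ℝ}
    (hg : ContDiffAt ℝ 3 g 0) (hb : ContDiffAt ℝ 3 b 0) (hg0 : g 0 = 0) (hg1 : deriv g 0 = 0)
    (hb0 : b 0 = 1)
    (h : (fun t => g t * b t ^ p) =ᶠ[𝓝 0] fun t => g (-t * b t)) :
    2 * iteratedDeriv 3 g 0 + 3 * (p - 2) * deriv b 0 * iteratedDeriv 2 g 0 = 0 := by
  have hb' : HasDerivAt b (deriv b 0) 0 := (hb.differentiableAt (by simp)).hasDerivAt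
  have hw : ContDiffAt ℝ 3 (fun t => b t ^ p) 0 := hb.rpow_const_of_ne (by simp [hb0])
  have hw1 : deriv (fun t => b t ^ p) 0 = p * deriv b 0 := by
    rw [(hb'.rpow_const (Or.inl (by simp [hb0]))).deriv, hb0]
    simp [mul_comm]
  have hneg : ContDiffAt ℝ 3 (fun t : ℝ => -t) 0 := contDiffAt_id.neg
  have hμ : ContDiffAt ℝ 3 (fun t => -t * b t) 0 := hneg.mul hb
  have hμ1 : deriv (fun t => -t * b t) 0 = -1 := by
    rw [((hasDerivAt_neg (0 : ℝ)).fun_mul hb').deriv]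
    simp [hb0]
  have hμ2 : iteratedDeriv 2 (fun t => -t * b t) 0 = -2 * deriv b 0 := by
    rw [iteratedDeriv_fun_mul (hneg.of_le (by norm_num)) (hb.of_le (by norm_num))]
    have h2 : iteratedDeriv 2 (fun t : ℝ => -t) 0 = 0 :=
      (iteratedDeriv_fun_neg 2 (fun t : ℝ => t) 0).trans (by simp [iteratedDeriv_fun_id])
    simp [Finset.sum_range_succ, h2]
  have hleft : iteratedDeriv 3 (fun t => g t * b t ^ p) 0 =
      iteratedDeriv 3 g 0 + 3 * iteratedDeriv 2 g 0 * (p * deriv b 0) := by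
    rw [iteratedDeriv_fun_mul hg hw]
    simp [Finset.sum_range_succ, hg0, hg1, hb0, hw1, add_comm]
  have hright : iteratedDeriv 3 (fun t => g (-t * b t)) 0 =
      -iteratedDeriv 3 g 0 - 3 * iteratedDeriv 2 g 0 * (-2 * deriv b 0) := by
    have hg' : ContDiffAt ℝ 3 g ((fun t => -t * b t) 0) := by simpa using hg
    change iteratedDeriv 3 (g ∘ fun t => -t * b t) 0 = _
    rw [iteratedDeriv_comp_three (f := fun t => -t * b t) hg' hμ, hμ1, hμ2]
    norm_num [hg1]
  have := h.iteratedDeriv_eq 3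
  rw [hleft, hright] at this
  linear_combination this

theorem mul_iteratedDeriv_three_add_eq_zero_of_moebius {g : ℝ → ℝ} {R σ m : ℝ} (hR : 0 < R)
    (hg : ContDiffAt ℝ 3 g 0) (hg0 : g 0 = 0) (hg1 : deriv g 0 = 0)
    (h : (fun t => g t * (R / (R + 2 * t * σ)) ^ (2 * m)) =ᶠ[𝓝 0]
      fun t => g (-R * t / (R + 2 * t * σ))) :
    R * iteratedDeriv 3 g 0 + 6 * (1 - m) * iteratedDeriv 2 g 0 * σ = 0 := by
  have hb : ContDiffAt ℝ 3 (fun t => R / (R + 2 * t * σ)) 0 :=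
    contDiffAt_const.div (by fun_prop) (by simp [hR.ne'])
  have hb1 : R * deriv (fun t => R / (R + 2 * t * σ)) 0 = -2 * σ := by
    have hden : HasDerivAt (fun t : ℝ => R + 2 * t * σ) (2 * σ) 0 := by
      simpa using (((hasDerivAt_id (0 : ℝ)).const_mul 2).mul_const σ).const_add R
    rw [((hasDerivAt_const 0 R).fun_div hden (by simp [hR.ne'])).deriv]
    field_simp [hR.ne']
    ring
  have h' : (fun t => g t * (R / (R + 2 * t * σ)) ^ (2 * m)) =ᶠ[𝓝 0]
      fun t => g (-t * (R / (R + 2 * t * σ))) :=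
    h.trans (.of_forall fun t => congrArg g (by ring))
  have key := two_mul_iteratedDeriv_three_add_eq_zero hg hb hg0 hg1 (by simp [hR.ne']) h'
  linear_combination (R / 2) * key - 3 * (m - 1) * iteratedDeriv 2 g 0 * hb1

theorem stmt14_general (U : Set (ℝ × ℝ)) (hU : IsOpen U) (x y : ℝ) (hxy : (x, y) ∈ U)
    (F : ℝ × ℝ → ℝ) (hF : ContDiffOn ℝ 3 F U)
    (hF0 : F (x, y) = 0) (m : ℝ)
    (R : ℝ) (hR0 : 0 < R)
    (Fx Fy σ : ℝ) (hFx : Fx = pdx F (x, y)) (hFy : Fy = pdy F (x, y))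
    (hinv : ∃ δ₀ > 0, ∀ ε : ℝ, 0 < |ε| → |ε| < δ₀ →
      F (x + ε * Fy, y - ε * Fx) * (R / (R + 2 * ε * σ)) ^ (2 * m) =
        F (x + (-R * ε / (R + 2 * ε * σ)) * Fy, y - (-R * ε / (R + 2 * ε * σ)) * Fx)) :
    R * (pdx (pdx (pdx F)) (x, y) * Fy ^ 3 -
          3 * pdy (pdx (pdx F)) (x, y) * Fy ^ 2 * Fx +
          3 * pdy (pdy (pdx F)) (x, y) * Fy * Fx ^ 2 -
          pdy (pdy (pdy F)) (x, y) * Fx ^ 3) +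
      6 * (1 - m) *
        (pdx (pdx F) (x, y) * Fy ^ 2 - 2 * pdy (pdx F) (x, y) * Fx * Fy +
          pdy (pdy F) (x, y) * Fx ^ 2) * σ = 0 := by
  set v : ℝ × ℝ := (Fy, -Fx)
  have h0 : (x, y) + (0 : ℝ) • v = (x, y) := by simp
  have h0U : (x, y) + (0 : ℝ) • v ∈ U := by rwa [h0]
  set g : ℝ → ℝ := fun t => F ((x, y) + t • v)
  have hg : ContDiffAt ℝ 3 g 0 := (hF.contDiffAt (hU.mem_nhds h0U)).comp (0 : ℝ) (by fun_prop)
  have hgn (n : ℕ) (hn : n ≤ 3) : iteratedDeriv n g 0 = (dirDeriv v)^[n] F (x, y) := by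
    rw [iteratedDeriv_comp_add_smul hU (hF.of_le (by exact_mod_cast hn)) h0U, h0]
  have hg1 : deriv g 0 = 0 := by
    rw [← iteratedDeriv_one, hgn 1 (by norm_num), Function.iterate_one,
      dirDeriv_eq_pdx_pdy ((hF.contDiffAt (hU.mem_nhds hxy)).differentiableAt (by simp)), ← hFx,
      ← hFy]
    ring
  have hid : (fun t => g t * (R / (R + 2 * t * σ)) ^ (2 * m)) =ᶠ[𝓝 0]
      fun t => g (-R * t / (R + 2 * t * σ)) := by
    obtain ⟨δ₀, hδ₀, hinv⟩ := hinv
    have hline (t : ℝ) : (x, y) + t • v = (x + t * Fy, y - t * Fx) := by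
      simp [v, sub_eq_add_neg]
    filter_upwards [Metric.ball_mem_nhds 0 hδ₀] with t ht
    rcases eq_or_ne t 0 with rfl | ht0
    · simp [g, hF0]
    · simpa only [g, hline] using hinv t (abs_pos.2 ht0) (by simpa using ht)
  have key :=
    mul_iteratedDeriv_three_add_eq_zero_of_moebius hR0 hg (by simpa [g] using hF0) hg1 hid
  rw [hgn 2 (by norm_num), hgn 3 (by norm_num), iterate_dirDeriv_three_apply hU hF v hxy,
    iterate_dirDeriv_two_eqOn hU (hF.of_le (by norm_num)) v hxy] at key
  linear_combination key

/-- equation (14) of the paper: extracting the `ε³`-coefficient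
from the invariance identity of Lemma 1 at a point `(x,y)` of `{F = 0}` with
`x² + y² > 0` yields
`R·(F_xxx F_y³ − 3F_xxy F_y² F_x + 3F_xyy F_y F_x² − F_yyy F_x³)
  + 6(1−m)·H(F)·σ = 0`. -/
theorem stmt14 (U : Set (ℝ × ℝ)) (hU : IsOpen U) (x y : ℝ) (hxy : (x, y) ∈ U)
    (F : ℝ × ℝ → ℝ) (hF : ContDiffOn ℝ 3 F U)
    (hF0 : F (x, y) = 0) (m : ℝ)
    (R : ℝ) (hR : R = x ^ 2 + y ^ 2) (hR0 : 0 < R)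
    (Fx Fy σ : ℝ) (hFx : Fx = pdx F (x, y)) (hFy : Fy = pdy F (x, y))
    (hσ : σ = x * Fy - y * Fx)
    (hinv : ∃ δ₀ > 0, ∀ ε : ℝ, 0 < |ε| → |ε| < δ₀ →
      F (x + ε * Fy, y - ε * Fx) * (R / (R + 2 * ε * σ)) ^ (2 * m) =
        F (x + (-R * ε / (R + 2 * ε * σ)) * Fy, y - (-R * ε / (R + 2 * ε * σ)) * Fx)) :
    R * (pdx (pdx (pdx F)) (x, y) * Fy ^ 3 -
          3 * pdy (pdx (pdx F)) (x, y) * Fy ^ 2 * Fx +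
          3 * pdy (pdy (pdx F)) (x, y) * Fy * Fx ^ 2 -
          pdy (pdy (pdy F)) (x, y) * Fx ^ 3) +
      6 * (1 - m) *
        (pdx (pdx F) (x, y) * Fy ^ 2 - 2 * pdy (pdx F) (x, y) * Fx * Fy +
          pdy (pdy F) (x, y) * Fx ^ 2) * σ = 0 :=
  stmt14_general U hU x y hxy F hF hF0 m R hR0 Fx Fy σ hFx hFy hinv
end
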